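/- Let C satisfy Assumption 2 and fix γ > 0. Define, for each problem instance (f_1,…,f_m, G) satisfying Assumption 1, the sets S_KKT = {X ∈ ℝ^{m×d} : ∃ Y ∈ ℝ^{m×d}, √C X = 0 and for each i the i-th row of −(∇f(X) + √C Y) is a subgradient of G at x_i} and S_Fix = {X ∈ ℝ^{m×d} : C X = 0 and ∃ V ∈ ℝ^{m×d} whose i-th row is a subgradient of G at x_i with 1ᵀ(I − A)X + γ 1ᵀ B ∇f(X) = −γ 1ᵀ V}. Then S_KKT = S_Fix holds for every problem instance satisfying Assumption 1 if and only if the matrices A, B ∈ ℝ^{m×m} satisfy Assumption 3: 1ᵀ A 1 = m and 1ᵀ B = 1ᵀ. -/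

import Mathlib

open Matrix

/-- Squared Euclidean norm of a vector in ℝ^d. -/
noncomputable def vecNormSq {d : ℕ} (v : Fin d → ℝ) : ℝ := ∑ j, v j ^ 2

/-- The continuous linear map `u ↦ ⟨v, u⟩` on ℝ^d (used to state that `v` is a gradient). -/
noncomputable def dotCLM {d : ℕ} (v : Fin d → ℝ) : (Fin d → ℝ) →L[ℝ] ℝ :=
  LinearMap.toContinuousLinearMap
    (∑ j, v j • (LinearMap.proj j : (Fin d → ℝ) →ₗ[ℝ] ℝ))

/-- Squared Frobenius norm. -/
noncomputable def frobSq {m d : ℕ} (X : Matrix (Fin m) (Fin d) ℝ) : ℝ :=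
  ∑ i, ∑ j, X i j ^ 2

/-- Frobenius inner product `⟨X, Y⟩_F = trace(Xᵀ Y)`. -/
noncomputable def frobInner {m d : ℕ} (X Y : Matrix (Fin m) (Fin d) ℝ) : ℝ :=
  ∑ i, ∑ j, X i j * Y i j

/-- All ones vector `1_m`. -/
def onesV (m : ℕ) : Fin m → ℝ := fun _ => 1

/-- The consensus matrix `1_m xᵀ` (all rows equal to `x`). -/
def consMat (m : ℕ) {d : ℕ} (x : Fin d → ℝ) : Matrix (Fin m) (Fin d) ℝ :=
  Matrix.of fun _ j => x j

/-- The matrix `∇f(X)` whose `i`-th row is `∇f_i(x_i)`. -/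
noncomputable def gradMat {m d : ℕ} (gradf : Fin m → (Fin d → ℝ) → (Fin d → ℝ))
    (X : Matrix (Fin m) (Fin d) ℝ) : Matrix (Fin m) (Fin d) ℝ :=
  Matrix.of fun i j => gradf i (X i) j

/-- `v` is a subgradient of the extended-valued convex function `G` at `x`. -/
def IsSubgradAt {d : ℕ} (G : (Fin d → ℝ) → EReal) (v x : Fin d → ℝ) : Prop :=
  ∀ u : Fin d → ℝ, G x + (((∑ j, v j * (u j - x j)) : ℝ) : EReal) ≤ G u

/-- Convexity for an extended-real-valued function. -/
def ERealConvexOn {d : ℕ} (G : (Fin d → ℝ) → EReal) : Prop :=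
  ∀ x y : Fin d → ℝ, ∀ a b : ℝ, 0 ≤ a → 0 ≤ b → a + b = 1 →
    G (a • x + b • y) ≤ (a : EReal) * G x + (b : EReal) * G y

/-- `G` is proper: never `⊥` and finite somewhere. -/
def GProper {d : ℕ} (G : (Fin d → ℝ) → EReal) : Prop :=
  (∀ x, G x ≠ ⊥) ∧ (∃ x, G x ≠ ⊤)

/-- `g(X) = Σ_i G(x_i)`. -/
noncomputable def gSum {m d : ℕ} (G : (Fin d → ℝ) → EReal)
    (X : Matrix (Fin m) (Fin d) ℝ) : EReal :=
  ∑ i, G (X i)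

/-- Objective of the proximal subproblem `Y ↦ g(Y) + (1/(2γ))‖Y − Z‖²_F`. -/
noncomputable def proxObj {m d : ℕ} (G : (Fin d → ℝ) → EReal) (γ : ℝ)
    (Z Y : Matrix (Fin m) (Fin d) ℝ) : EReal :=
  gSum G Y + (((1 / (2 * γ) * frobSq (Y - Z)) : ℝ) : EReal)

/-- `P` is the unique minimizer of the proximal subproblem, i.e. `P = prox_{γ g}(Z)`. -/
def IsProx {m d : ℕ} (G : (Fin d → ℝ) → EReal) (γ : ℝ)
    (Z P : Matrix (Fin m) (Fin d) ℝ) : Prop :=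
  (∀ Y, proxObj G γ Z P ≤ proxObj G γ Z Y) ∧
  (∀ Y, (∀ Y', proxObj G γ Z Y ≤ proxObj G γ Z Y') → Y = P)

/-- Largest eigenvalue of a symmetric matrix, via the Rayleigh quotient. -/
noncomputable def lamMax {m : ℕ} (P : Matrix (Fin m) (Fin m) ℝ) : ℝ :=
  sSup {r : ℝ | ∃ z : Fin m → ℝ, vecNormSq z = 1 ∧ r = z ⬝ᵥ (P *ᵥ z)}

/-- Smallest eigenvalue of a symmetric matrix, via the Rayleigh quotient. -/
noncomputable def lamMin {m : ℕ} (P : Matrix (Fin m) (Fin m) ℝ) : ℝ :=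
  sInf {r : ℝ | ∃ z : Fin m → ℝ, vecNormSq z = 1 ∧ r = z ⬝ᵥ (P *ᵥ z)}

/-- Second-smallest eigenvalue `λ₂(C) = min{⟨z, Cz⟩ : ‖z‖ = 1, 1ᵀz = 0}`. -/
noncomputable def lam2 {m : ℕ} (C : Matrix (Fin m) (Fin m) ℝ) : ℝ :=
  sInf {r : ℝ | ∃ z : Fin m → ℝ, vecNormSq z = 1 ∧ (∑ i, z i) = 0 ∧ r = z ⬝ᵥ (C *ᵥ z)}

/-- The positive semidefinite square root of a positive semidefinite matrix
(as defined in Mathlib of December 2024; removed from later Mathlib). -/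
noncomputable def Matrix.PosSemidef.sqrt {n : Type*} [Fintype n] [DecidableEq n] {𝕜 : Type*}
    [RCLike 𝕜] [PartialOrder 𝕜] {A : Matrix n n 𝕜} (hA : A.PosSemidef) : Matrix n n 𝕜 :=
  hA.1.eigenvectorUnitary.1 * diagonal ((↑) ∘ (Real.sqrt ·) ∘ hA.1.eigenvalues) *
    (star hA.1.eigenvectorUnitary : Matrix n n 𝕜)

/-!
Write `S = √C`. Like `C`, the symmetric matrix `S` has kernel `span 1`, so its range is the
hyperplane `1ᵀw = 0`: the constraint `S X = 0` says that `X = 1 xᵀ` is a consensus matrix, and a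
matrix `W` is of the form `S Y` iff `1ᵀ W = 0`. Under Assumption 3 the term `1ᵀ(I - A) X` vanishes
on consensus matrices and `1ᵀ B ∇f(X) = 1ᵀ ∇f(X)`, so the fixed-point equation says exactly that
`-∇f(X) - V` is of the form `S Y`, which is the KKT condition.

Conversely, take `f_i(y) = ½‖y - x - aᵢ w‖²` and the linear `G = ⟨β w, ·⟩`. If `∑ aᵢ = m β`
then `1 xᵀ` is a KKT point, and the fixed-point equation there reads
`(1ᵀ(I - A)1) x = γ ((1ᵀB) a - m β) w`. The choice `x = 1, a = 0` gives `1ᵀA1 = m`, and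
`x = 0, a = e_k, β = 1/m` gives `(1ᵀB)_k = 1`.
-/

namespace Matrix.PosSemidef

variable {n : Type*} [Fintype n] [DecidableEq n] {C : Matrix n n ℝ}

theorem isHermitian_sqrt (hC : C.PosSemidef) : hC.sqrt.IsHermitian := by
  rw [Matrix.PosSemidef.sqrt, IsHermitian, conjTranspose_mul, conjTranspose_mul,
    diagonal_conjTranspose, star_eq_conjTranspose, conjTranspose_conjTranspose, star_trivial,
    Matrix.mul_assoc]

theorem sqrt_mul_sqrt (hC : C.PosSemidef) : hC.sqrt * hC.sqrt = C := by
  set U : Matrix n n ℝ := hC.1.eigenvectorUnitary.1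
  have hUU : star U * U = 1 := by simp [U]
  have hD : diagonal ((↑) ∘ (Real.sqrt ·) ∘ hC.1.eigenvalues) *
      diagonal ((↑) ∘ (Real.sqrt ·) ∘ hC.1.eigenvalues) =
      diagonal (RCLike.ofReal ∘ hC.1.eigenvalues : n → ℝ) := by
    rw [diagonal_mul_diagonal]
    congr 1
    funext i
    simp [Real.mul_self_sqrt (hC.eigenvalues_nonneg i)]
  conv_rhs => rw [hC.1.spectral_theorem, Unitary.conjStarAlgAut_apply, ← hD]
  change U * _ * star U * (U * _ * star U) = U * _ * star U
  simp only [Matrix.mul_assoc]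
  rw [← Matrix.mul_assoc (star U) U, hUU, Matrix.one_mul]
  rfl

theorem sqrt_mulVec_eq_zero_iff (hC : C.PosSemidef) (z : n → ℝ) :
    hC.sqrt *ᵥ z = 0 ↔ C *ᵥ z = 0 := by
  refine ⟨fun h => by rw [← hC.sqrt_mul_sqrt, ← mulVec_mulVec, h, mulVec_zero], fun h => ?_⟩
  have hquad : (hC.sqrt *ᵥ z) ⬝ᵥ (hC.sqrt *ᵥ z) = z ⬝ᵥ (C *ᵥ z) := by
    rw [dotProduct_mulVec, ← mulVec_transpose, ← conjTranspose_eq_transpose_of_trivial,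
      hC.isHermitian_sqrt.eq, mulVec_mulVec, hC.sqrt_mul_sqrt, dotProduct_comm]
  rw [← dotProduct_self_eq_zero, hquad, h, dotProduct_zero]

end Matrix.PosSemidef

theorem Matrix.IsHermitian.exists_mulVec_eq_of_sum_eq_zero {n : Type*} [Fintype n]
    [DecidableEq n] {S : Matrix n n ℝ} (hS : S.IsHermitian)
    (hker : ∀ z : n → ℝ, S *ᵥ z = 0 ↔ ∃ c : ℝ, z = fun _ => c)
    (w : n → ℝ) (hw : ∑ i, w i = 0) : ∃ y, S *ᵥ y = w := by
  have hrange : WithLp.toLp 2 w ∈ LinearMap.range S.toEuclideanLin := by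
    rw [← Submodule.orthogonal_orthogonal (LinearMap.range _),
      (isSymmetric_toEuclideanLin_iff.mpr hS).orthogonal_range, Submodule.mem_orthogonal]
    intro u hu
    obtain ⟨c, hc⟩ := (hker u.ofLp).mp (by simpa using congrArg WithLp.ofLp hu)
    simp [EuclideanSpace.inner_eq_star_dotProduct, hc, dotProduct, ← Finset.sum_mul, hw]
  obtain ⟨y, hy⟩ := hrange
  exact ⟨y.ofLp, by simpa using congrArg WithLp.ofLp hy⟩

section Consensus

variable {m d : ℕ}

theorem consMat_eq_vecMulVec (x : Fin d → ℝ) : consMat m x = vecMulVec (onesV m) x := by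
  ext i j
  simp [consMat, vecMulVec_apply, onesV]

theorem mul_eq_zero_iff_exists_consMat {M : Matrix (Fin m) (Fin m) ℝ}
    (hker : ∀ z : Fin m → ℝ, M *ᵥ z = 0 ↔ ∃ c : ℝ, z = fun _ => c)
    (X : Matrix (Fin m) (Fin d) ℝ) : M * X = 0 ↔ ∃ x, X = consMat m x := by
  constructor
  · intro h
    have hcol (j : Fin d) : ∃ c : ℝ, (fun i => X i j) = fun _ => c :=
      (hker _).mp (funext fun i => by
        simpa [mulVec, dotProduct, Matrix.mul_apply] using congrFun (congrFun h i) j)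
    choose x hx using hcol
    exact ⟨x, by ext i j; simpa [consMat] using congrFun (hx j) i⟩
  · rintro ⟨x, rfl⟩
    rw [consMat_eq_vecMulVec, mul_vecMulVec, (hker (onesV m)).mpr ⟨1, rfl⟩, zero_vecMulVec]

theorem onesV_vecMul_eq_zero {S : Matrix (Fin m) (Fin m) ℝ} (hS : S.IsHermitian)
    (hker : ∀ z : Fin m → ℝ, S *ᵥ z = 0 ↔ ∃ c : ℝ, z = fun _ => c) : onesV m ᵥ* S = 0 := by
  rw [← mulVec_transpose, ← conjTranspose_eq_transpose_of_trivial, hS.eq]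
  exact (hker _).mpr ⟨1, rfl⟩

theorem Matrix.IsHermitian.exists_mul_eq_of_vecMul_eq_zero {S : Matrix (Fin m) (Fin m) ℝ}
    (hS : S.IsHermitian) (hker : ∀ z : Fin m → ℝ, S *ᵥ z = 0 ↔ ∃ c : ℝ, z = fun _ => c)
    (W : Matrix (Fin m) (Fin d) ℝ) (hW : onesV m ᵥ* W = 0) :
    ∃ Y : Matrix (Fin m) (Fin d) ℝ, S * Y = W := by
  have hcol (j : Fin d) : ∃ y, S *ᵥ y = fun i => W i j :=
    hS.exists_mulVec_eq_of_sum_eq_zero hker _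
      (by simpa [vecMul, dotProduct, onesV] using congrFun hW j)
  choose y hy using hcol
  exact ⟨Matrix.of fun i j => y j i, by
    ext i j; simpa [Matrix.mul_apply, mulVec, dotProduct] using congrFun (hy j) i⟩

theorem onesV_vecMul_mul_consMat (M : Matrix (Fin m) (Fin m) ℝ) (x : Fin d → ℝ) :
    onesV m ᵥ* (M * consMat m x) = (onesV m ⬝ᵥ (M *ᵥ onesV m)) • x := by
  rw [consMat_eq_vecMulVec, mul_vecMulVec, vecMul_vecMulVec]

theorem onesV_dotProduct_one_sub_mulVec (A : Matrix (Fin m) (Fin m) ℝ) :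
    onesV m ⬝ᵥ ((1 - A) *ᵥ onesV m) = m - onesV m ⬝ᵥ (A *ᵥ onesV m) := by
  simp [sub_mulVec, onesV, dotProduct]

end Consensus

section TestProblems

variable {d : ℕ}

def linFun (b : Fin d → ℝ) : (Fin d → ℝ) → EReal := fun u => ((b ⬝ᵥ u : ℝ) : EReal)

theorem isSubgradAt_linFun_iff (b v x : Fin d → ℝ) : IsSubgradAt (linFun b) v x ↔ v = b := by
  simp only [IsSubgradAt, linFun, ← EReal.coe_add, EReal.coe_le_coe_iff]
  refine ⟨fun h => ?_, fun h u => by subst h; simp [dotProduct, mul_sub]⟩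
  have hsq : (v - b) ⬝ᵥ (v - b) ≤ 0 := by
    have := h (x + (v - b))
    change b ⬝ᵥ x + v ⬝ᵥ (x + (v - b) - x) ≤ b ⬝ᵥ (x + (v - b)) at this
    rw [add_sub_cancel_left, dotProduct_add] at this
    rw [sub_dotProduct]
    linarith
  exact sub_eq_zero.mp
    (dotProduct_self_eq_zero.mp (le_antisymm hsq (dotProduct_self_star_nonneg _)))

theorem gProper_linFun (b : Fin d → ℝ) : GProper (linFun b) :=
  ⟨fun _ => EReal.coe_ne_bot _, ⟨0, EReal.coe_ne_top _⟩⟩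

theorem erealConvexOn_linFun (b : Fin d → ℝ) : ERealConvexOn (linFun b) := by
  intro x y s t _ _ _
  simp only [linFun, ← EReal.coe_mul, ← EReal.coe_add, dotProduct_add,
    dotProduct_smul, smul_eq_mul, le_refl]

theorem lowerSemicontinuous_linFun (b : Fin d → ℝ) : LowerSemicontinuous (linFun b) :=
  (continuous_coe_real_ereal.comp (continuous_const.dotProduct continuous_id)).lowerSemicontinuous

theorem hasFDerivAt_half_vecNormSq_sub (p x : Fin d → ℝ) :
    HasFDerivAt (fun y => 1 / 2 * vecNormSq (y - p)) (dotCLM (x - p)) x := by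
  have hcoord (j : Fin d) : HasFDerivAt (fun y : Fin d → ℝ => (y - p) j ^ 2)
      ((2 * (x - p) j) • (ContinuousLinearMap.proj j : (Fin d → ℝ) →L[ℝ] ℝ)) x := by
    simpa using ((hasFDerivAt_apply j x).sub_const (p j)).pow 2
  refine ((HasFDerivAt.fun_sum fun j _ => hcoord j).const_mul (1 / 2)).congr_fderiv ?_
  ext u
  simp [dotCLM, Finset.mul_sum, mul_assoc]

theorem convexOn_half_vecNormSq_sub_sub (p : Fin d → ℝ) :
    ConvexOn ℝ Set.univ fun x => 1 / 2 * vecNormSq (x - p) - 1 / 2 * vecNormSq x := by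
  have haff : (fun x => 1 / 2 * vecNormSq (x - p) - 1 / 2 * vecNormSq x) =
      fun x => 1 / 2 * vecNormSq p - p ⬝ᵥ x := by
    funext x
    simp only [vecNormSq, dotProduct, Pi.sub_apply, Finset.mul_sum, ← Finset.sum_sub_distrib]
    exact Finset.sum_congr rfl fun j _ => by ring
  rw [haff]
  exact (convexOn_const _ convex_univ).sub
    (LinearMap.concaveOn (dotProductBilin ℝ ℝ p) convex_univ)

end TestProblems

section OptimalitySets

variable {m d : ℕ}

/-- `S_KKT`, with `S` in the role of `√C`. -/
def kktSet (S : Matrix (Fin m) (Fin m) ℝ) (gradf : Fin m → (Fin d → ℝ) → (Fin d → ℝ))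
    (G : (Fin d → ℝ) → EReal) : Set (Matrix (Fin m) (Fin d) ℝ) :=
  {X | ∃ Y : Matrix (Fin m) (Fin d) ℝ,
    S * X = 0 ∧ ∀ i : Fin m, IsSubgradAt G ((-(gradMat gradf X + S * Y)) i) (X i)}

def fixSet (C A B : Matrix (Fin m) (Fin m) ℝ) (γ : ℝ)
    (gradf : Fin m → (Fin d → ℝ) → (Fin d → ℝ)) (G : (Fin d → ℝ) → EReal) :
    Set (Matrix (Fin m) (Fin d) ℝ) :=
  {X | C * X = 0 ∧ ∃ V : Matrix (Fin m) (Fin d) ℝ,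
    (∀ i : Fin m, IsSubgradAt G (V i) (X i)) ∧
    onesV m ᵥ* ((1 - A) * X) + γ • (onesV m ᵥ* (B * gradMat gradf X)) =
      -(γ • (onesV m ᵥ* V))}

variable {C A B : Matrix (Fin m) (Fin m) ℝ} {γ : ℝ}

theorem sqrt_mulVec_eq_zero_iff_exists_const (hC : C.PosSemidef)
    (hnull : ∀ z : Fin m → ℝ, C *ᵥ z = 0 ↔ ∃ c : ℝ, z = fun _ => c) (z : Fin m → ℝ) :
    hC.sqrt *ᵥ z = 0 ↔ ∃ c : ℝ, z = fun _ => c :=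
  (hC.sqrt_mulVec_eq_zero_iff z).trans (hnull z)

theorem kktSet_eq_fixSet (hC : C.PosSemidef)
    (hnull : ∀ z : Fin m → ℝ, C *ᵥ z = 0 ↔ ∃ c : ℝ, z = fun _ => c) (hγ : γ ≠ 0)
    (hA : onesV m ⬝ᵥ (A *ᵥ onesV m) = m) (hB : onesV m ᵥ* B = onesV m)
    (gradf : Fin m → (Fin d → ℝ) → (Fin d → ℝ)) (G : (Fin d → ℝ) → EReal) :
    kktSet hC.sqrt gradf G = fixSet C A B γ gradf G := by
  have hS := sqrt_mulVec_eq_zero_iff_exists_const hC hnull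
  have hconsensus {X : Matrix (Fin m) (Fin d) ℝ} (hX : C * X = 0) :
      onesV m ᵥ* ((1 - A) * X) = 0 := by
    obtain ⟨x, rfl⟩ := (mul_eq_zero_iff_exists_consMat hnull X).mp hX
    rw [onesV_vecMul_mul_consMat, onesV_dotProduct_one_sub_mulVec, hA, sub_self, zero_smul]
  ext X
  constructor
  · rintro ⟨Y, hSX, hsub⟩
    have hCX : C * X = 0 := (mul_eq_zero_iff_exists_consMat hnull X).mpr
      ((mul_eq_zero_iff_exists_consMat hS X).mp hSX)
    refine ⟨hCX, _, hsub, ?_⟩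
    rw [hconsensus hCX, ← vecMul_vecMul, hB, vecMul_neg, vecMul_add, ← vecMul_vecMul,
      onesV_vecMul_eq_zero hC.isHermitian_sqrt hS]
    simp
  · rintro ⟨hCX, V, hV, heq⟩
    rw [hconsensus hCX, zero_add, ← vecMul_vecMul, hB, ← smul_neg,
      (smul_right_injective _ hγ).eq_iff] at heq
    obtain ⟨Y, hY⟩ := hC.isHermitian_sqrt.exists_mul_eq_of_vecMul_eq_zero hS
      (-gradMat gradf X - V) (by rw [vecMul_sub, vecMul_neg, heq]; simp)
    have hrow : -(gradMat gradf X + hC.sqrt * Y) = V := by rw [hY]; abel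
    exact ⟨Y, (mul_eq_zero_iff_exists_consMat hS X).mpr
      ((mul_eq_zero_iff_exists_consMat hnull X).mp hCX), fun i => hrow ▸ hV i⟩

theorem gradMat_sub_consMat (a : Fin m → ℝ) (x w : Fin d → ℝ) :
    gradMat (fun i y => y - (x + a i • w)) (consMat m x) = -vecMulVec a w := by
  ext i j
  simp [gradMat, consMat, vecMulVec_apply]

theorem consMat_mem_kktSet (hC : C.PosSemidef)
    (hnull : ∀ z : Fin m → ℝ, C *ᵥ z = 0 ↔ ∃ c : ℝ, z = fun _ => c)
    {a : Fin m → ℝ} {β : ℝ} (hβ : ∑ i, a i = m * β) (x w : Fin d → ℝ) :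
    consMat m x ∈ kktSet hC.sqrt (fun i y => y - (x + a i • w)) (linFun (β • w)) := by
  have hS := sqrt_mulVec_eq_zero_iff_exists_const hC hnull
  obtain ⟨Y, hY⟩ := hC.isHermitian_sqrt.exists_mul_eq_of_vecMul_eq_zero hS
    (vecMulVec (a - β • onesV m) w) (by
      rw [vecMul_vecMulVec]
      simp [dotProduct, onesV, Finset.sum_sub_distrib, hβ])
  refine ⟨Y, (mul_eq_zero_iff_exists_consMat hS _).mpr ⟨x, rfl⟩, fun i => ?_⟩
  rw [gradMat_sub_consMat, hY, isSubgradAt_linFun_iff]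
  ext j
  simp [vecMulVec_apply, onesV]
  ring

theorem smul_eq_of_consMat_mem_fixSet {a : Fin m → ℝ} {β : ℝ} {x w : Fin d → ℝ}
    (h : consMat m x ∈ fixSet C A B γ (fun i y => y - (x + a i • w)) (linFun (β • w))) :
    (onesV m ⬝ᵥ ((1 - A) *ᵥ onesV m)) • x = (γ * ((onesV m ᵥ* B) ⬝ᵥ a - m * β)) • w := by
  obtain ⟨-, V, hV, heq⟩ := h
  have hV' : V = consMat m (β • w) := by
    ext i j
    rw [(isSubgradAt_linFun_iff _ _ _).mp (hV i)]
    rfl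
  have hones : onesV m ⬝ᵥ onesV m = m := by simp [onesV, dotProduct]
  rw [gradMat_sub_consMat, hV', onesV_vecMul_mul_consMat, Matrix.mul_neg, mul_vecMulVec,
    vecMul_neg, vecMul_vecMulVec, consMat_eq_vecMulVec, vecMul_vecMulVec, dotProduct_mulVec _ B,
    hones] at heq
  linear_combination (norm := module) heq

theorem assumption3_of_forall_kktSet_eq_fixSet (hd : 0 < d) (hC : C.PosSemidef)
    (hnull : ∀ z : Fin m → ℝ, C *ᵥ z = 0 ↔ ∃ c : ℝ, z = fun _ => c) (hγ : γ ≠ 0)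
    (key : ∀ (p : Fin m → Fin d → ℝ) (b : Fin d → ℝ),
      kktSet hC.sqrt (fun i y => y - p i) (linFun b) =
        fixSet C A B γ (fun i y => y - p i) (linFun b)) :
    onesV m ⬝ᵥ (A *ᵥ onesV m) = m ∧ onesV m ᵥ* B = onesV m := by
  have htest {a : Fin m → ℝ} {β : ℝ} (hβ : ∑ i, a i = m * β) (x w : Fin d → ℝ) :
      (onesV m ⬝ᵥ ((1 - A) *ᵥ onesV m)) • x = (γ * ((onesV m ᵥ* B) ⬝ᵥ a - m * β)) • w :=
    smul_eq_of_consMat_mem_fixSet (key _ _ ▸ consMat_mem_kktSet hC hnull hβ x w)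
  constructor
  · have := congrFun (htest (a := 0) (β := 0) (by simp) (onesV d) 0) ⟨0, hd⟩
    simp [onesV_dotProduct_one_sub_mulVec, onesV] at this
    linarith
  · funext k
    have hm : (m : ℝ) ≠ 0 := Nat.cast_ne_zero.mpr (Fin.pos k).ne'
    have := congrFun (htest (a := Pi.single k 1) (β := 1 / m) (by simp [hm]) 0 (onesV d))
      ⟨0, hd⟩
    simp [onesV, hm, hγ] at this
    exact sub_eq_zero.mp this

end OptimalitySets

theorem stmt_3_general {m d : ℕ} (hd : 0 < d)
    (C A B : Matrix (Fin m) (Fin m) ℝ) (hC : C.PosSemidef)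
    (hnull : ∀ z : Fin m → ℝ, C *ᵥ z = 0 ↔ ∃ c : ℝ, z = fun _ => c)
    (γ : ℝ) (hγ : 0 < γ) :
    (∀ (μ L : ℝ) (f : Fin m → (Fin d → ℝ) → ℝ)
        (gradf : Fin m → (Fin d → ℝ) → (Fin d → ℝ)) (G : (Fin d → ℝ) → EReal),
      0 < μ → μ ≤ L →
      (∀ i x, HasFDerivAt (f i) (dotCLM (gradf i x)) x) →
      (∀ i, ConvexOn ℝ Set.univ fun x => f i x - μ / 2 * vecNormSq x) →
      (∀ i x y, vecNormSq (gradf i x - gradf i y) ≤ L ^ 2 * vecNormSq (x - y)) →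
      GProper G → ERealConvexOn G → LowerSemicontinuous G →
      {X : Matrix (Fin m) (Fin d) ℝ | ∃ Y : Matrix (Fin m) (Fin d) ℝ,
          hC.sqrt * X = 0 ∧
          ∀ i : Fin m, IsSubgradAt G ((-(gradMat gradf X + hC.sqrt * Y)) i) (X i)} =
      {X : Matrix (Fin m) (Fin d) ℝ | C * X = 0 ∧
          ∃ V : Matrix (Fin m) (Fin d) ℝ,
            (∀ i : Fin m, IsSubgradAt G (V i) (X i)) ∧
            onesV m ᵥ* ((1 - A) * X) + γ • (onesV m ᵥ* (B * gradMat gradf X)) =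
              -(γ • (onesV m ᵥ* V))}) ↔
      (onesV m ⬝ᵥ (A *ᵥ onesV m) = (m : ℝ) ∧ onesV m ᵥ* B = onesV m) := by
  constructor
  · intro H
    exact assumption3_of_forall_kktSet_eq_fixSet hd hC hnull hγ.ne' fun p b =>
      H 1 1 (fun i y => 1 / 2 * vecNormSq (y - p i)) _ _ one_pos le_rfl
        (fun i => hasFDerivAt_half_vecNormSq_sub (p i))
        (fun i => convexOn_half_vecNormSq_sub_sub (p i))
        (fun i x y => by rw [sub_sub_sub_cancel_right, one_pow, one_mul])
        (gProper_linFun b) (erealConvexOn_linFun b) (lowerSemicontinuous_linFun b)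
  · rintro ⟨hA, hB⟩ μ L f gradf G - - - - - - - -
    exact kktSet_eq_fixSet hC hnull hγ.ne' hA hB gradf G

/-- `S_KKT = S_Fix` for every problem instance iff Assumption 3 holds. -/
theorem stmt_3 {m d : ℕ} (hm : 0 < m) (hd : 0 < d)
    (C A B : Matrix (Fin m) (Fin m) ℝ) (hC : C.PosSemidef)
    (hnull : ∀ z : Fin m → ℝ, C *ᵥ z = 0 ↔ ∃ c : ℝ, z = fun _ => c)
    (γ : ℝ) (hγ : 0 < γ) :
    (∀ (μ L : ℝ) (f : Fin m → (Fin d → ℝ) → ℝ)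
        (gradf : Fin m → (Fin d → ℝ) → (Fin d → ℝ)) (G : (Fin d → ℝ) → EReal),
      0 < μ → μ ≤ L →
      (∀ i x, HasFDerivAt (f i) (dotCLM (gradf i x)) x) →
      (∀ i, ConvexOn ℝ Set.univ fun x => f i x - μ / 2 * vecNormSq x) →
      (∀ i x y, vecNormSq (gradf i x - gradf i y) ≤ L ^ 2 * vecNormSq (x - y)) →
      GProper G → ERealConvexOn G → LowerSemicontinuous G →
      {X : Matrix (Fin m) (Fin d) ℝ | ∃ Y : Matrix (Fin m) (Fin d) ℝ,
          hC.sqrt * X = 0 ∧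
          ∀ i : Fin m, IsSubgradAt G ((-(gradMat gradf X + hC.sqrt * Y)) i) (X i)} =
      {X : Matrix (Fin m) (Fin d) ℝ | C * X = 0 ∧
          ∃ V : Matrix (Fin m) (Fin d) ℝ,
            (∀ i : Fin m, IsSubgradAt G (V i) (X i)) ∧
            onesV m ᵥ* ((1 - A) * X) + γ • (onesV m ᵥ* (B * gradMat gradf X)) =
              -(γ • (onesV m ᵥ* V))}) ↔
      (onesV m ⬝ᵥ (A *ᵥ onesV m) = (m : ℝ) ∧ onesV m ᵥ* B = onesV m) :=
  stmt_3_general hd C A B hC hnull γ hγ
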